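/- Let a_i and s_i, i ∈ ℕ, be nonnegative random variables on a probability space, define A(τ,t) = Σ_{i=τ}^{t−1} a_i and S(τ,t) = Σ_{i=τ}^{t−1} s_i, and let D(0,t), t ∈ ℕ, be nondecreasing in t and satisfy the dynamic-server property D(0,t′) ≥ min_{0≤τ≤t′} ( A(0,τ) + S(τ,t′) ) for all t′. Let θ > 0, δ_b ≥ 0, and p, q > 0 with p·q < 1; fix t, w ∈ ℕ and assume that for each 0 ≤ u ≤ t the random variables A(u,t) and S(u,t+w) are independent, that E[e^{θ·A(u,t)}] ≤ e^{θ·δ_b}·p^{t−u} for all 0 ≤ u ≤ t, and that E[e^{−θ·S(u,t+w)}] ≤ q^{t+w−u} for all 0 ≤ u ≤ t+w. Then the virtual delay W(t) = inf{ w′ ∈ ℕ : A(0,t) ≤ D(0,t+w′) } satisfies P( W(t) > w ) ≤ e^{θ·δ_b}·q^{w} / (1 − p·q). (This is the delay part of Theorem 2.) -/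

import Mathlib

open MeasureTheory ProbabilityTheory Finset

/-!
If the virtual delay at `t` exceeds `w`, then `D(0,t+w) < A(0,t)`, and the dynamic-server
bound at `t+w`, read at the minimising `τ`, produces some `u < t` with `S(u,t+w) < A(u,t)`.
By independence, the Chernoff bound for `A(u,t) - S(u,t+w)` factors into the two envelopes and
gives `e^{θ δ_b} q^w (pq)^{t-u}`; the union bound over `u ≤ t` then sums a geometric series of
ratio `pq < 1`.
-/

theorem not_of_natCast_lt_iInf {P : ℕ → Prop} {w : ℕ}
    (h : (w : ℕ∞) < ⨅ (n : ℕ) (_ : P n), (n : ℕ∞)) : ¬ P w :=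
  fun hw => h.not_ge (iInf₂_le w hw)

theorem exists_sum_Ico_lt_sum_Ico_of_dynamic_server {a s : ℕ → ℝ} (ha : ∀ i, 0 ≤ a i)
    (hs : ∀ i, 0 ≤ s i) {n t : ℕ} {d : ℝ}
    (hd : (range (n + 1)).inf' nonempty_range_add_one
      (fun τ => (∑ i ∈ Ico 0 τ, a i) + ∑ i ∈ Ico τ n, s i) ≤ d)
    (hlt : d < ∑ i ∈ Ico 0 t, a i) :
    ∃ u < t, ∑ i ∈ Ico u n, s i < ∑ i ∈ Ico u t, a i := by
  obtain ⟨τ, -, hτ⟩ := exists_mem_eq_inf' nonempty_range_add_one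
    (fun τ => (∑ i ∈ Ico 0 τ, a i) + ∑ i ∈ Ico τ n, s i)
  rw [hτ] at hd
  have hτt : τ < t := by
    by_contra! htτ
    have hA : ∑ i ∈ Ico 0 t, a i ≤ ∑ i ∈ Ico 0 τ, a i :=
      sum_le_sum_of_subset_of_nonneg (Ico_subset_Ico le_rfl htτ) fun i _ _ => ha i
    have hS : 0 ≤ ∑ i ∈ Ico τ n, s i := sum_nonneg fun i _ => hs i
    linarith
  refine ⟨τ, hτt, ?_⟩
  have hsplit := sum_Ico_consecutive a (Nat.zero_le τ) hτt.le
  linarith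

theorem ProbabilityTheory.IndepFun.measureReal_lt_le_mgf_mul_mgf {Ω : Type*}
    [MeasurableSpace Ω] {μ : Measure Ω} [IsFiniteMeasure μ] {X Y : Ω → ℝ}
    (hXY : IndepFun X Y μ) {θ : ℝ} (hθ : 0 ≤ θ)
    (hX : Integrable (fun ω => Real.exp (θ * X ω)) μ)
    (hY : Integrable (fun ω => Real.exp (-θ * Y ω)) μ) :
    μ.real {ω | Y ω < X ω} ≤ mgf X μ θ * mgf Y μ (-θ) := by
  have hY' : Integrable (fun ω => Real.exp (θ * (-Y) ω)) μ := by
    simpa only [Pi.neg_apply, mul_neg, neg_mul] using hY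
  calc μ.real {ω | Y ω < X ω} ≤ μ.real {ω | 0 ≤ (X + -Y) ω} :=
        measureReal_mono fun ω (h : Y ω < X ω) => show 0 ≤ X ω + -Y ω by linarith
    _ ≤ Real.exp (-θ * 0) * mgf (X + -Y) μ θ :=
        measure_ge_le_exp_mul_mgf 0 hθ (hXY.neg_right.integrable_exp_mul_add hX hY')
    _ = mgf X μ θ * mgf Y μ (-θ) := by
        rw [mul_zero, Real.exp_zero, one_mul, hXY.neg_right.mgf_add hX.aestronglyMeasurable
          hY'.aestronglyMeasurable, mgf_neg]

theorem ProbabilityTheory.integrable_exp_neg_mul_of_nonneg {Ω : Type*} [MeasurableSpace Ω]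
    {μ : Measure Ω} [IsFiniteMeasure μ] {Y : Ω → ℝ} (hY : AEMeasurable Y μ)
    (hY0 : ∀ ω, 0 ≤ Y ω) {θ : ℝ} (hθ : 0 ≤ θ) :
    Integrable (fun ω => Real.exp (-θ * Y ω)) μ := by
  simpa only [Pi.neg_apply, mul_neg, neg_mul] using integrable_exp_mul_of_le (X := -Y) θ 0 hθ
    hY.neg (ae_of_all _ fun ω => neg_nonpos.2 (hY0 ω))

theorem sum_range_pow_sub_le_one_div {r : ℝ} (h0 : 0 ≤ r) (h1 : r < 1) (t : ℕ) :
    ∑ u ∈ range (t + 1), r ^ (t - u) ≤ 1 / (1 - r) := by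
  have hreflect := sum_range_reflect (fun k => r ^ k) (t + 1)
  rw [add_tsub_cancel_right] at hreflect
  rw [hreflect, range_eq_Ico]
  simpa using geom_sum_Ico_le_of_lt_one (m := 0) (n := t + 1) h0 h1

theorem measureReal_biUnion_range_le_div_one_sub {Ω : Type*} [MeasurableSpace Ω]
    {μ : Measure Ω} [IsFiniteMeasure μ] {E : ℕ → Set Ω} {c r : ℝ} (hc : 0 ≤ c) (hr0 : 0 ≤ r)
    (hr1 : r < 1) {t : ℕ} (hE : ∀ u ≤ t, μ.real (E u) ≤ c * r ^ (t - u)) :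
    μ.real (⋃ u ∈ range (t + 1), E u) ≤ c / (1 - r) :=
  calc μ.real (⋃ u ∈ range (t + 1), E u) ≤ ∑ u ∈ range (t + 1), μ.real (E u) :=
        measureReal_biUnion_finset_le _ _
    _ ≤ ∑ u ∈ range (t + 1), c * r ^ (t - u) :=
        sum_le_sum fun u hu => hE u (mem_range_succ_iff.1 hu)
    _ = c * ∑ u ∈ range (t + 1), r ^ (t - u) := (mul_sum ..).symm
    _ ≤ c * (1 / (1 - r)) := by gcongr; exact sum_range_pow_sub_le_one_div hr0 hr1 t
    _ = c / (1 - r) := mul_one_div _ _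

/-- delay part of Theorem 2 of the paper. For a dynamic server with
nondecreasing cumulative departures, cumulative arrivals `A(τ,t) = ∑_{i=τ}^{t-1} aᵢ` and
service `S(τ,t) = ∑_{i=τ}^{t-1} sᵢ`, independence of `A(u,t)` and `S(u,t+w)` for each
`u ≤ t`, envelopes `E[e^{θ A(u,t)}] ≤ e^{θ δ_b} p^{t-u}` (for `u ≤ t`) and
`E[e^{-θ S(u,t+w)}] ≤ q^{t+w-u}` (for `u ≤ t+w`), and stability `p·q < 1`, the virtual
delay `W(t) = inf { w' : A(0,t) ≤ D(0,t+w') }` (valued in `ℕ∞`) satisfies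
`P(W(t) > w) ≤ e^{θ δ_b} q^w / (1 - pq)`. -/
theorem delay_violation_probability_bound
    {Ω : Type*} [MeasureSpace Ω] [IsProbabilityMeasure (ℙ : Measure Ω)]
    (a s : ℕ → Ω → ℝ)
    (hsmeas : ∀ i, Measurable (s i))
    (ha : ∀ i ω, 0 ≤ a i ω) (hs : ∀ i ω, 0 ≤ s i ω)
    (D : ℕ → Ω → ℝ)
    (hD : ∀ (t' : ℕ) (ω : Ω),
      (range (t' + 1)).inf' ⟨0, by simp⟩
          (fun τ => (∑ i ∈ Ico 0 τ, a i ω) + ∑ i ∈ Ico τ t', s i ω) ≤ D t' ω)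
    (W : ℕ → Ω → ℕ∞)
    (hW : ∀ (t : ℕ) (ω : Ω),
      W t ω = ⨅ (w' : ℕ) (_ : (∑ i ∈ Ico 0 t, a i ω) ≤ D (t + w') ω), (w' : ℕ∞))
    (θ δb p q : ℝ) (hθ : 0 < θ) (hp : 0 < p) (hq : 0 < q)
    (hpq : p * q < 1) (t w : ℕ)
    (hindep : ∀ u : ℕ, u ≤ t →
      IndepFun (fun ω => ∑ i ∈ Ico u t, a i ω) (fun ω => ∑ i ∈ Ico u (t + w), s i ω) ℙ)
    (hAint : ∀ u : ℕ, u ≤ t →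
      Integrable (fun ω => Real.exp (θ * ∑ i ∈ Ico u t, a i ω)) ℙ)
    (hA : ∀ u : ℕ, u ≤ t →
      ∫ ω : Ω, Real.exp (θ * ∑ i ∈ Ico u t, a i ω) ∂ℙ ≤ Real.exp (θ * δb) * p ^ (t - u))
    (hS : ∀ u : ℕ, u ≤ t + w →
      ∫ ω : Ω, Real.exp (-θ * ∑ i ∈ Ico u (t + w), s i ω) ∂ℙ ≤ q ^ (t + w - u)) :
    (ℙ {ω : Ω | (w : ℕ∞) < W t ω}).toReal ≤
      Real.exp (θ * δb) * q ^ w / (1 - p * q) := by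
  set A : ℕ → Ω → ℝ := fun u ω => ∑ i ∈ Ico u t, a i ω
  set S : ℕ → Ω → ℝ := fun u ω => ∑ i ∈ Ico u (t + w), s i ω
  have hsub : {ω | (w : ℕ∞) < W t ω} ⊆ ⋃ u ∈ range (t + 1), {ω | S u ω < A u ω} := by
    intro ω hω
    have hω : (w : ℕ∞) < W t ω := hω
    rw [hW] at hω
    obtain ⟨u, hu, hlt⟩ := exists_sum_Ico_lt_sum_Ico_of_dynamic_server (ha · ω) (hs · ω)
      (hD (t + w) ω) (not_le.1 (not_of_natCast_lt_iInf hω))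
    exact Set.mem_biUnion (mem_range.2 (by omega)) hlt
  have hbound : ∀ u ≤ t, (ℙ : Measure Ω).real {ω | S u ω < A u ω} ≤
      Real.exp (θ * δb) * q ^ w * (p * q) ^ (t - u) := by
    intro u hut
    have hSint := integrable_exp_neg_mul_of_nonneg (μ := ℙ)
      (Finset.measurable_sum _ fun i _ => hsmeas i).aemeasurable
      (fun ω => sum_nonneg fun i _ => hs i ω : ∀ ω, 0 ≤ S u ω) hθ.le
    calc (ℙ : Measure Ω).real {ω | S u ω < A u ω} ≤ mgf (A u) ℙ θ * mgf (S u) ℙ (-θ) :=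
          (hindep u hut).measureReal_lt_le_mgf_mul_mgf hθ.le (hAint u hut) hSint
      _ ≤ Real.exp (θ * δb) * p ^ (t - u) * q ^ (t + w - u) :=
          mul_le_mul (hA u hut) (hS u (by omega)) mgf_nonneg (by positivity)
      _ = Real.exp (θ * δb) * q ^ w * (p * q) ^ (t - u) := by
          rw [show t + w - u = (t - u) + w by omega, pow_add, mul_pow]; ring
  calc (ℙ {ω : Ω | (w : ℕ∞) < W t ω}).toReal
      ≤ (ℙ : Measure Ω).real (⋃ u ∈ range (t + 1), {ω | S u ω < A u ω}) :=
        measureReal_mono hsub (measure_ne_top _ _)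
    _ ≤ Real.exp (θ * δb) * q ^ w / (1 - p * q) :=
        measureReal_biUnion_range_le_div_one_sub (by positivity) (by positivity) hpq hbound
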